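/- arXiv:2410.01740 — 2 statements merged into one kernel-verified Lean document; each statement's English description precedes it below -/
import Mathlib

section
/- For every generalized state divergence 𝔻, every quantum channel N from system A' to system A, every completely positive map M from A' to A, and every quantum superchannel Θ from (A',A) to (C',C) — i.e., a transformation of the form Θ(L) = P^post_{AE→C} ∘ (L ⊗ id_E) ∘ P^pre_{C'→A'E} for some quantum channels P^pre_{C'→A'E} and P^post_{AE→C} and finite-dimensional memory system E — the generalized channel function is monotone under the action of Θ: 𝔻[N‖M] ≥ 𝔻[Θ(N)‖Θ(M)]. -/
namespace QIT

open Matrix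
open scoped Kronecker ComplexOrder

noncomputable section

/-- Square matrices over `ℂ` indexed by `ι`, the operators on the Hilbert space `ℂ^ι`. -/
abbrev Mat (ι : Type) : Type := Matrix ι ι ℂ

/-- Linear maps between matrix spaces. -/
abbrev MatMap (ι κ : Type) : Type := Mat ι →ₗ[ℂ] Mat κ

/-- The tensor product `L₁ ⊗ L₂` of two linear maps on matrix spaces, defined entrywise
via matrix units. -/
def tensorMap {ι₁ κ₁ ι₂ κ₂ : Type} [Fintype ι₁] [DecidableEq ι₁] [Fintype ι₂] [DecidableEq ι₂]
    (L₁ : MatMap ι₁ κ₁) (L₂ : MatMap ι₂ κ₂) : MatMap (ι₁ × ι₂) (κ₁ × κ₂) where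
  toFun X := Matrix.of fun p q => ∑ k₁, ∑ l₁, ∑ k₂, ∑ l₂,
      X (k₁, k₂) (l₁, l₂) * L₁ (Matrix.single k₁ l₁ 1) p.1 q.1
        * L₂ (Matrix.single k₂ l₂ 1) p.2 q.2
  map_add' X Y := by
    ext p q
    simp [Matrix.add_apply, add_mul, Finset.sum_add_distrib]
  map_smul' c X := by
    ext p q
    simp [Matrix.smul_apply, smul_eq_mul, Finset.mul_sum, mul_assoc]

/-- A quantum state: positive semidefinite with unit trace. -/
def IsState {ι : Type} [Fintype ι] (ρ : Mat ι) : Prop :=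
  ρ.PosSemidef ∧ ρ.trace = 1

/-- Trace preserving linear map. -/
def TracePreserving {ι κ : Type} [Fintype ι] [Fintype κ] (L : MatMap ι κ) : Prop :=
  ∀ X, (L X).trace = X.trace

/-- Complete positivity: `id_R ⊗ L` preserves positive semidefiniteness for every
finite-dimensional reference system `R`. -/
def IsCP {ι κ : Type} [Fintype ι] [DecidableEq ι] [Fintype κ] (L : MatMap ι κ) : Prop :=
  ∀ (r : ℕ) (X : Mat (Fin r × ι)), X.PosSemidef →
    (tensorMap (LinearMap.id : MatMap (Fin r) (Fin r)) L X).PosSemidef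

/-- A quantum channel: completely positive and trace preserving. -/
def IsChannel {ι κ : Type} [Fintype ι] [DecidableEq ι] [Fintype κ] (L : MatMap ι κ) : Prop :=
  IsCP L ∧ TracePreserving L

/-- The completely mixing (depolarizing) map `X ↦ tr(X) · 1`. -/
def Rmap (ι κ : Type) [Fintype ι] [DecidableEq κ] : MatMap ι κ where
  toFun X := X.trace • (1 : Mat κ)
  map_add' X Y := by simp [Matrix.trace_add, add_smul]
  map_smul' c X := by simp [Matrix.trace_smul, mul_smul]

/-- A generalized state divergence: a function of a pair (state, positive semidefinite
operator) on a common finite-dimensional system, satisfying the data-processing inequality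
under all quantum channels. -/
structure StateDivergence : Type 1 where
  D : ∀ {ι : Type} [Fintype ι] [DecidableEq ι], Mat ι → Mat ι → EReal
  dpi : ∀ {ι κ : Type} [Fintype ι] [DecidableEq ι] [Fintype κ] [DecidableEq κ]
      (L : MatMap ι κ), IsChannel L → ∀ ρ σ : Mat ι, IsState ρ → σ.PosSemidef →
      D (L ρ) (L σ) ≤ D ρ σ

/-- The generalized channel function `𝔻[N‖M]`: supremum over all finite-dimensional
reference systems `R = Fin r` and all input states of the state divergence of the outputs. -/
def chDiv (𝔻 : StateDivergence) {ι κ : Type} [Fintype ι] [DecidableEq ι]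
    [Fintype κ] [DecidableEq κ] (N M : MatMap ι κ) : EReal :=
  ⨆ (r : ℕ) (ρ : {ρ : Mat (Fin r × ι) // IsState ρ}),
    𝔻.D (tensorMap (LinearMap.id : MatMap (Fin r) (Fin r)) N ρ.1)
        (tensorMap (LinearMap.id : MatMap (Fin r) (Fin r)) M ρ.1)

/-! Enlarge the reference system by the memory: `(id_R ⊗ pre) ρ`, read as a state on
`(R × E) ⊗ A'`, is a legitimate input for `𝔻[N‖M]`, and applying the channel `id_R ⊗ post`
to `(id_{R×E} ⊗ N)` of it gives back `(id_R ⊗ Θ(N)) ρ` (likewise for `M`). Data processing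
under `id_R ⊗ post` then bounds each term of the supremum defining `𝔻[Θ(N)‖Θ(M)]`. -/

lemma trace_submatrix_equiv {ι κ : Type} [Fintype ι] [Fintype κ] (e : κ ≃ ι) (X : Mat ι) :
    (X.submatrix e e).trace = X.trace :=
  Fintype.sum_equiv e _ _ fun _ => rfl

lemma IsState.submatrix_equiv {ι κ : Type} [Fintype ι] [Fintype κ] {X : Mat ι} (hX : IsState X)
    (e : κ ≃ ι) :
    IsState (X.submatrix e e) :=
  ⟨hX.1.submatrix e, (trace_submatrix_equiv e X).trans hX.2⟩

variable {ι κ μ R S : Type} [Fintype ι] [DecidableEq ι] [Fintype R] [DecidableEq R]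
  [Fintype S] [DecidableEq S]

lemma map_apply_eq_sum_single (L : MatMap ι κ) (Y : Mat ι) (p q : κ) :
    L Y p q = ∑ k, ∑ l, Y k l * L (Matrix.single k l 1) p q := by
  conv_lhs => rw [Y.matrix_eq_sum_single]
  simp only [map_sum, Matrix.sum_apply]
  refine Finset.sum_congr rfl fun k _ => Finset.sum_congr rfl fun l _ => ?_
  rw [← smul_eq_mul, ← Matrix.smul_apply, ← map_smul, Matrix.smul_single, smul_eq_mul,
    mul_one]

lemma tensorMap_id_left_apply (L : MatMap ι κ) (X : Mat (R × ι)) (r r' : R) (p q : κ) :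
    tensorMap (LinearMap.id : MatMap R R) L X (r, p) (r', q)
      = L (X.submatrix (Prod.mk r) (Prod.mk r')) p q := by
  rw [map_apply_eq_sum_single L]
  simp [tensorMap, Matrix.single_apply, ite_and]

lemma submatrix_prodMk_tensorMap_id_left (L : MatMap ι κ) (X : Mat (R × ι)) (r r' : R) :
    (tensorMap (LinearMap.id : MatMap R R) L X).submatrix (Prod.mk r) (Prod.mk r')
      = L (X.submatrix (Prod.mk r) (Prod.mk r')) := by
  ext p q
  exact tensorMap_id_left_apply L X r r' p q

lemma tensorMap_id_right_apply (L : MatMap ι κ) (X : Mat (ι × R)) (p q : κ) (r r' : R) :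
    tensorMap L (LinearMap.id : MatMap R R) X (p, r) (q, r')
      = L (X.submatrix (·, r) (·, r')) p q := by
  rw [map_apply_eq_sum_single L]
  simp [tensorMap, Matrix.single_apply, ite_and]

lemma tensorMap_id_left_comp [Fintype κ] [DecidableEq κ] (L₁ : MatMap ι κ)
    (L₂ : MatMap κ μ) :
    tensorMap (LinearMap.id : MatMap R R) (L₂ ∘ₗ L₁)
      = tensorMap (LinearMap.id : MatMap R R) L₂ ∘ₗ
        tensorMap (LinearMap.id : MatMap R R) L₁ := by
  refine LinearMap.ext fun X => ?_
  ext ⟨r, p⟩ ⟨r', q⟩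
  simp only [LinearMap.comp_apply, tensorMap_id_left_apply, submatrix_prodMk_tensorMap_id_left]

lemma tensorMap_id_left_submatrix (L : MatMap ι κ) (f : S → R) (X : Mat (R × ι)) :
    tensorMap (LinearMap.id : MatMap S S) L (X.submatrix (Prod.map f id) (Prod.map f id))
      = (tensorMap (LinearMap.id : MatMap R R) L X).submatrix (Prod.map f id) (Prod.map f id) := by
  ext ⟨s, p⟩ ⟨s', q⟩
  simp only [tensorMap_id_left_apply, Matrix.submatrix_apply, Prod.map_apply, id_eq]
  rfl

lemma tensorMap_id_left_tensorMap_id_left (L : MatMap ι κ) (X : Mat (R × (S × ι))) :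
    tensorMap (LinearMap.id : MatMap R R) (tensorMap (LinearMap.id : MatMap S S) L) X
      = (tensorMap (LinearMap.id : MatMap (R × S) (R × S)) L
          (X.submatrix (Equiv.prodAssoc R S ι) (Equiv.prodAssoc R S ι))).submatrix
        (Equiv.prodAssoc R S κ).symm (Equiv.prodAssoc R S κ).symm := by
  ext ⟨r, s, p⟩ ⟨r', s', q⟩
  simp only [Matrix.submatrix_apply, Equiv.prodAssoc_symm_apply, tensorMap_id_left_apply]
  rfl

lemma IsCP.posSemidef_tensorMap_id_left [Fintype κ] {L : MatMap ι κ} (hL : IsCP L)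
    {X : Mat (R × ι)} (hX : X.PosSemidef) :
    (tensorMap (LinearMap.id : MatMap R R) L X).PosSemidef := by
  set e := Fintype.equivFin R
  have hX' := hL _ _ (hX.submatrix (Prod.map e.symm id))
  rw [tensorMap_id_left_submatrix] at hX'
  convert hX'.submatrix (Prod.map e id) using 1
  ext ⟨r, p⟩ ⟨r', q⟩
  simp

lemma IsCP.tensorMap_id_left [Fintype κ] {L : MatMap ι κ} (hL : IsCP L) :
    IsCP (tensorMap (LinearMap.id : MatMap R R) L) := fun _ X hX => by
  rw [tensorMap_id_left_tensorMap_id_left]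
  exact (hL.posSemidef_tensorMap_id_left (hX.submatrix _)).submatrix _

lemma TracePreserving.tensorMap_id_left [Fintype κ] {L : MatMap ι κ} (hL : TracePreserving L) :
    TracePreserving (tensorMap (LinearMap.id : MatMap R R) L) := fun X => by
  simp only [Matrix.trace, Matrix.diag, Fintype.sum_prod_type, tensorMap_id_left_apply]
  exact Finset.sum_congr rfl fun r _ => hL _

lemma IsChannel.tensorMap_id_left [Fintype κ] {L : MatMap ι κ} (hL : IsChannel L) :
    IsChannel (tensorMap (LinearMap.id : MatMap R R) L) :=
  ⟨hL.1.tensorMap_id_left, hL.2.tensorMap_id_left⟩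

lemma IsChannel.comp [Fintype κ] [DecidableEq κ] [Fintype μ] {L₁ : MatMap ι κ}
    {L₂ : MatMap κ μ} (h₁ : IsChannel L₁) (h₂ : IsChannel L₂) : IsChannel (L₂ ∘ₗ L₁) :=
  ⟨fun r X hX => by
    rw [tensorMap_id_left_comp]
    exact h₂.1 r _ (h₁.1 r X hX),
   fun X => (h₂.2 _).trans (h₁.2 X)⟩

lemma IsChannel.isState_tensorMap_id_left [Fintype κ] {L : MatMap ι κ} (hL : IsChannel L)
    {X : Mat (R × ι)} (hX : IsState X) :
    IsState (tensorMap (LinearMap.id : MatMap R R) L X) :=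
  ⟨hL.1.posSemidef_tensorMap_id_left hX.1, (hL.2.tensorMap_id_left X).trans hX.2⟩

lemma isChannel_reindex [Fintype κ] (e : ι ≃ κ) :
    IsChannel (reindexLinearEquiv ℂ ℂ e e : MatMap ι κ) := by
  refine ⟨fun r X hX => ?_, fun X => trace_submatrix_equiv e.symm X⟩
  convert hX.submatrix (Prod.map id e.symm)
  ext ⟨s, p⟩ ⟨s', q⟩
  rw [tensorMap_id_left_apply]
  rfl

lemma StateDivergence.le_chDiv (𝔻 : StateDivergence) [Fintype κ] [DecidableEq κ]
    {N M : MatMap ι κ} (hN : IsChannel N) (hM : IsCP M) {X : Mat (R × ι)} (hX : IsState X) :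
    𝔻.D (tensorMap (LinearMap.id : MatMap R R) N X) (tensorMap (LinearMap.id : MatMap R R) M X)
      ≤ chDiv 𝔻 N M := by
  set e := Fintype.equivFin R
  set X' := X.submatrix (Prod.map e.symm id) (Prod.map e.symm id)
  have hX' : IsState X' := hX.submatrix_equiv (e.symm.prodCongr (Equiv.refl ι))
  have hback (L : MatMap ι κ) : reindexLinearEquiv ℂ ℂ (e.prodCongr (Equiv.refl κ)).symm
      (e.prodCongr (Equiv.refl κ)).symm (tensorMap LinearMap.id L X')
        = tensorMap (LinearMap.id : MatMap R R) L X := by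
    rw [tensorMap_id_left_submatrix]
    ext ⟨r, p⟩ ⟨r', q⟩
    simp
  rw [← hback N, ← hback M]
  exact (𝔻.dpi _ (isChannel_reindex _) _ _ (hN.isState_tensorMap_id_left hX')
    (hM.posSemidef_tensorMap_id_left hX'.1)).trans (le_iSup₂_of_le _ ⟨X', hX'⟩ le_rfl)

def memoryRegroup (R E ι : Type) : (R × E) × ι ≃ R × (ι × E) :=
  (Equiv.prodAssoc R E ι).trans ((Equiv.refl R).prodCongr (Equiv.prodComm E ι))

lemma tensorMap_id_left_submatrix_memoryRegroup (L : MatMap ι κ) (X : Mat (R × (ι × S))) :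
    tensorMap (LinearMap.id : MatMap (R × S) (R × S)) L
        (X.submatrix (memoryRegroup R S ι) (memoryRegroup R S ι))
      = (tensorMap (LinearMap.id : MatMap R R) (tensorMap L (LinearMap.id : MatMap S S))
          X).submatrix (memoryRegroup R S κ) (memoryRegroup R S κ) := by
  ext ⟨⟨r, s⟩, p⟩ ⟨⟨r', s'⟩, q⟩
  simp only [Matrix.submatrix_apply, memoryRegroup, Equiv.trans_apply, Equiv.prodAssoc_apply,
    Equiv.prodCongr_apply, Prod.map_apply, Equiv.refl_apply, Equiv.prodComm_apply,
    Prod.swap_prod_mk, tensorMap_id_left_apply, tensorMap_id_right_apply]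
  rfl

lemma tensorMap_id_left_superchannel {ν : Type} [Fintype ν] [DecidableEq ν]
    [Fintype κ] [DecidableEq κ] (pre : MatMap ν (ι × S)) (L : MatMap ι κ)
    (post : MatMap (κ × S) μ) (X : Mat (R × ν)) :
    tensorMap (LinearMap.id : MatMap R R)
        (post ∘ₗ tensorMap L (LinearMap.id : MatMap S S) ∘ₗ pre) X
      = (tensorMap (LinearMap.id : MatMap R R) post ∘ₗ
          (reindexLinearEquiv ℂ ℂ (memoryRegroup R S κ) (memoryRegroup R S κ) : MatMap _ _))
        (tensorMap (LinearMap.id : MatMap (R × S) (R × S)) L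
          ((tensorMap (LinearMap.id : MatMap R R) pre X).submatrix
            (memoryRegroup R S ι) (memoryRegroup R S ι))) := by
  rw [tensorMap_id_left_submatrix_memoryRegroup]
  simp only [tensorMap_id_left_comp, LinearMap.comp_apply, LinearEquiv.coe_coe,
    coe_reindexLinearEquiv, reindex_apply, submatrix_submatrix, Equiv.self_comp_symm,
    submatrix_id_id]

/-- monotonicity of the generalized channel function under superchannels. -/
theorem stmt0 (𝔻 : StateDivergence) (a' a c' c e : ℕ)
    (N : MatMap (Fin a') (Fin a)) (hN : IsChannel N)
    (M : MatMap (Fin a') (Fin a)) (hM : IsCP M)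
    (pre : MatMap (Fin c') (Fin a' × Fin e)) (hpre : IsChannel pre)
    (post : MatMap (Fin a × Fin e) (Fin c)) (hpost : IsChannel post) :
    chDiv 𝔻 (post ∘ₗ (tensorMap N (LinearMap.id : MatMap (Fin e) (Fin e))) ∘ₗ pre)
             (post ∘ₗ (tensorMap M (LinearMap.id : MatMap (Fin e) (Fin e))) ∘ₗ pre)
      ≤ chDiv 𝔻 N M := by
  refine iSup₂_le fun r ⟨ρ, hρ⟩ => ?_
  have hρ' := (hpre.isState_tensorMap_id_left hρ).submatrix_equiv
    (memoryRegroup (Fin r) (Fin e) (Fin a'))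
  rw [tensorMap_id_left_superchannel, tensorMap_id_left_superchannel]
  exact (𝔻.dpi _ ((isChannel_reindex _).comp hpost.tensorMap_id_left) _ _
    (hN.isState_tensorMap_id_left hρ') (hM.posSemidef_tensorMap_id_left hρ'.1)).trans
    (𝔻.le_chDiv hN hM hρ')

end
end QIT
end

section
/- For every bipartite quantum channel N_{A'B'→AB}, the von Neumann conditional entropy of the channel is upper bounded by the least output conditional entropy: S[A|B]_N ≤ inf_ψ S(A|RB)_{(id_R⊗N)(ψ)}, where the infimum is over all finite-dimensional reference systems R and all pure states ψ_{RA'B'}. -/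
/-!
Fix a reference `R`, an input `ψ_{RA'B'}` and a channel `M_{B'→B}`, and let
`ρ = (id_R ⊗ N)(ψ)`. Regrouping the output as `A ⊗ RB`, the state `(id_R ⊗ R_{A'→A} ⊗ M)(ψ)` is
`1_A ⊗ σ_{RB}` with `σ = (id_R ⊗ M)(ψ_{RB'})`. Since
`D(ρ‖1_A ⊗ σ) = D(ρ‖1_A ⊗ ρ_{RB}) + D(ρ_{RB}‖σ)` and the last term is nonnegative by Klein's
inequality, we get `−S(A|RB)_ρ ≤ D((id ⊗ N)(ψ)‖(id ⊗ R ⊗ M)(ψ)) ≤ D[N‖R ⊗ M]`. Taking the infimum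
over `M` and then over `ψ` gives the bound.
-/

namespace QIT

open Matrix
open scoped Kronecker ComplexOrder

noncomputable section

/-- Partial trace over the first tensor factor. -/
def ptraceLeftMap (ι κ : Type) [Fintype ι] : MatMap (ι × κ) κ where
  toFun X := Matrix.of fun p q => ∑ k, X (k, p) (k, q)
  map_add' X Y := by
    ext p q
    simp [Matrix.add_apply, Finset.sum_add_distrib]
  map_smul' c X := by
    ext p q
    simp [Matrix.smul_apply, smul_eq_mul, Finset.mul_sum]

/-- The unitary channel of relabeling induced by an equivalence of index types. -/
def reindexMap {ι κ : Type} (e : ι ≃ κ) : MatMap ι κ :=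
  (Matrix.reindexLinearEquiv ℂ ℂ e e).toLinearMap

/-- Matrix logarithm (base 2) of a Hermitian matrix, via the spectral decomposition;
junk value `0` on non-Hermitian matrices.  `Real.logb 2 0 = 0` implements the usual
convention on the kernel. -/
def matLog {ι : Type} [Fintype ι] [DecidableEq ι] (ρ : Mat ι) : Mat ι :=
  if h : ρ.IsHermitian then
    (h.eigenvectorUnitary : Mat ι) *
      Matrix.diagonal (fun i => (Real.logb 2 (h.eigenvalues i) : ℂ)) *
      (h.eigenvectorUnitary : Mat ι)ᴴ
  else 0

/-- `supp ρ ⊆ supp σ`, expressed through kernels. -/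
def suppSubset {ι : Type} [Fintype ι] (ρ σ : Mat ι) : Prop :=
  ∀ v : ι → ℂ, σ *ᵥ v = 0 → ρ *ᵥ v = 0

open scoped Classical in

/-- The Umegaki relative entropy `D(ρ‖σ)` (base 2), as an extended real:
`tr (ρ (log ρ − log σ))` if `supp ρ ⊆ supp σ`, and `+∞` otherwise. -/
def relEnt {ι : Type} [Fintype ι] [DecidableEq ι] (ρ σ : Mat ι) : EReal :=
  if suppSubset ρ σ then (((ρ * (matLog ρ - matLog σ)).trace.re : ℝ) : EReal) else ⊤

/-- The channel divergence induced by the Umegaki relative entropy. -/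
def relChDiv {ι κ : Type} [Fintype ι] [DecidableEq ι] [Fintype κ] [DecidableEq κ]
    (N M : MatMap ι κ) : EReal :=
  ⨆ (r : ℕ) (ρ : {ρ : Mat (Fin r × ι) // IsState ρ}),
    relEnt (tensorMap (LinearMap.id : MatMap (Fin r) (Fin r)) N ρ.1)
           (tensorMap (LinearMap.id : MatMap (Fin r) (Fin r)) M ρ.1)

/-- The von Neumann conditional entropy `S[A|B]_N` of a bipartite channel. -/
def vnCondEnt {α' β' α β : Type}
    [Fintype α'] [DecidableEq α'] [Fintype β'] [DecidableEq β']
    [Fintype α] [DecidableEq α] [Fintype β] [DecidableEq β]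
    (N : MatMap (α' × β') (α × β)) : EReal :=
  - ⨅ (M : {M : MatMap β' β // IsChannel M}),
      relChDiv N (tensorMap (Rmap α' α) M.1)

/-- The von Neumann conditional entropy `S(A|B)_ρ = −D(ρ_{AB}‖1_A ⊗ ρ_B)` of a bipartite
state. -/
def vnCondEntState {α β : Type} [Fintype α] [DecidableEq α] [Fintype β] [DecidableEq β]
    (ρ : Mat (α × β)) : EReal :=
  - relEnt ρ ((1 : Mat α) ⊗ₖ (ptraceLeftMap α β ρ))

/-- Pure states: rank-one projections `|v⟩⟨v|`. -/
def IsPure {ι : Type} (ψ : Mat ι) : Prop :=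
  ∃ v : ι → ℂ, ψ = Matrix.vecMulVec v (star v)

/-- The regrouping `R × (A × B) ≃ A × (R × B)`. -/
def swapRA (R A B : Type) : (R × (A × B)) ≃ (A × (R × B)) where
  toFun p := (p.2.1, (p.1, p.2.2))
  invFun p := (p.2.1, (p.1, p.2.2))
  left_inv p := rfl
  right_inv p := rfl

/-- `inf_ψ S(A|RB)_{(id_R ⊗ N)(ψ)}`, the least output conditional entropy of a bipartite
channel, over all finite-dimensional references `R` and pure input states `ψ_{R A'B'}`. -/
def minOutCondEnt {a' b' a b : ℕ} (N : MatMap (Fin a' × Fin b') (Fin a × Fin b)) : EReal :=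
  ⨅ (r : ℕ) (ψ : {ψ : Mat (Fin r × (Fin a' × Fin b')) // IsState ψ ∧ IsPure ψ}),
    vnCondEntState (reindexMap (swapRA (Fin r) (Fin a) (Fin b))
      (tensorMap (LinearMap.id : MatMap (Fin r) (Fin r)) N ψ.1))


section MatLog

variable {ι κ : Type} [Fintype ι] [DecidableEq ι] [Fintype κ] [DecidableEq κ]

theorem matLog_of_isHermitian {ρ : Mat ι} (hρ : ρ.IsHermitian) :
    matLog ρ = hρ.cfc (Real.logb 2) := by
  rw [matLog, dif_pos hρ, IsHermitian.cfc, Unitary.conjStarAlgAut_apply]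
  rfl

theorem matLog_eq_cfc (ρ : Mat ι) : matLog ρ = cfc (Real.logb 2) ρ := by
  by_cases hρ : ρ.IsHermitian
  · rw [matLog_of_isHermitian hρ, hρ.cfc_eq]
  · rw [matLog, dif_neg hρ]
    exact (cfc_apply_of_not_predicate ρ hρ).symm

theorem matLog_map (φ : Mat ι →⋆ₐ[ℂ] Mat κ) {ρ : Mat ι} (hρ : ρ.IsHermitian) :
    φ (matLog ρ) = matLog (φ ρ) := by
  rw [matLog_eq_cfc, matLog_eq_cfc]
  exact φ.map_cfc (Real.logb 2) ρ (ρ.finite_real_spectrum.continuousOn _)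
    (LinearMap.continuous_of_finiteDimensional φ.toLinearMap) hρ (hρ.isSelfAdjoint.map φ)

def reindexStarAlgEquiv (e : ι ≃ κ) : Mat ι ≃⋆ₐ[ℂ] Mat κ :=
  { reindexAlgEquiv ℂ ℂ e with
    map_star' := fun X => (conjTranspose_submatrix X _ _).symm
    map_smul' := map_smul (reindexAlgEquiv ℂ ℂ e) }

def oneKroneckerStarAlgHom : Mat κ →⋆ₐ[ℂ] Mat (ι × κ) where
  toFun X := (1 : Mat ι) ⊗ₖ X
  map_one' := one_kronecker_one
  map_mul' X Y := by rw [← mul_kronecker_mul, one_mul]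
  map_zero' := kronecker_zero _
  map_add' := kronecker_add _
  commutes' c := by simp [Algebra.algebraMap_eq_smul_one, kronecker_smul]
  map_star' X := by simp [star_eq_conjTranspose, conjTranspose_kronecker]

theorem matLog_reindexMap (e : ι ≃ κ) (ρ : Mat ι) :
    matLog (reindexMap e ρ) = reindexMap e (matLog ρ) := by
  by_cases hρ : ρ.IsHermitian
  · exact (matLog_map (reindexStarAlgEquiv e : Mat ι →⋆ₐ[ℂ] Mat κ) hρ).symm
  · have hρ' : ¬ (reindexMap e ρ).IsHermitian := fun h => hρ <| by
      simpa [reindexMap] using h.submatrix e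
    rw [matLog, dif_neg hρ', matLog, dif_neg hρ, map_zero]

theorem matLog_one_kronecker {σ : Mat κ} (hσ : σ.IsHermitian) :
    matLog ((1 : Mat ι) ⊗ₖ σ) = (1 : Mat ι) ⊗ₖ matLog σ :=
  (matLog_map (oneKroneckerStarAlgHom : Mat κ →⋆ₐ[ℂ] Mat (ι × κ)) hσ).symm

end MatLog

section Klein

theorem sub_le_mul_log_sub_log {p q : ℝ} (hp : 0 ≤ p) (hq : 0 ≤ q) (hpq : q = 0 → p = 0) :
    p - q ≤ p * (Real.log p - Real.log q) := by
  rcases hp.eq_or_lt with rfl | hp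
  · simpa using hq
  rcases hq.eq_or_lt with rfl | hq
  · exact absurd (hpq rfl) hp.ne'
  have h := Real.one_sub_inv_le_log_of_pos (div_pos hp hq)
  rw [Real.log_div hp.ne' hq.ne', inv_div] at h
  calc p - q = p * (1 - q / p) := by field_simp
    _ ≤ p * (Real.log p - Real.log q) := mul_le_mul_of_nonneg_left h hp.le

theorem sum_mul_logb_sub_logb_nonneg {ι κ : Type} [Fintype ι] [Fintype κ] {p : ι → ℝ}
    {q : κ → ℝ} {c : ι → κ → ℝ} (hp : ∀ i, 0 ≤ p i) (hq : ∀ j, 0 ≤ q j) (hc : ∀ i j, 0 ≤ c i j)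
    (hrow : ∀ i, ∑ j, c i j = 1) (hcol : ∀ j, ∑ i, c i j = 1) (hpq : ∑ i, p i = ∑ j, q j)
    (hsupp : ∀ i j, c i j ≠ 0 → q j = 0 → p i = 0) :
    0 ≤ ∑ i, ∑ j, c i j * p i * (Real.logb 2 (p i) - Real.logb 2 (q j)) := by
  have hlog2 : 0 < Real.log 2 := Real.log_pos one_lt_two
  have hterm : ∀ i j, c i j * (p i - q j) / Real.log 2
      ≤ c i j * p i * (Real.logb 2 (p i) - Real.logb 2 (q j)) := by
    intro i j
    by_cases hcij : c i j = 0
    · simp [hcij]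
    have h := sub_le_mul_log_sub_log (hp i) (hq j) (hsupp i j hcij)
    rw [Real.logb, Real.logb, ← sub_div, ← mul_div_assoc, mul_assoc]
    exact div_le_div_of_nonneg_right (mul_le_mul_of_nonneg_left h (hc i j)) hlog2.le
  have hmass : ∑ i, ∑ j, c i j * (p i - q j) = 0 := by
    simp only [mul_sub, Finset.sum_sub_distrib]
    rw [Finset.sum_comm (f := fun i j => c i j * q j)]
    simp only [mul_comm _ (p _), mul_comm _ (q _), ← Finset.mul_sum, hrow, hcol, mul_one, hpq,
      sub_self]
  calc 0 = ∑ i, ∑ j, c i j * (p i - q j) / Real.log 2 := by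
        simp only [← Finset.sum_div, hmass, zero_div]
    _ ≤ _ := Finset.sum_le_sum fun i _ => Finset.sum_le_sum fun j _ => hterm i j

variable {ι : Type} [Fintype ι] [DecidableEq ι]

theorem sum_normSq_row_eq_one {W : Mat ι} (hW : W ∈ unitary (Mat ι)) (i : ι) :
    ∑ j, Complex.normSq (W i j) = 1 := by
  have h : (W * star W) i i = 1 := by rw [Unitary.mul_star_self_of_mem hW, one_apply_eq]
  simp only [mul_apply, star_apply, RCLike.star_def, Complex.mul_conj] at h
  exact_mod_cast h

theorem sum_normSq_col_eq_one {W : Mat ι} (hW : W ∈ unitary (Mat ι)) (j : ι) :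
    ∑ i, Complex.normSq (W i j) = 1 := by
  simpa [star_apply] using sum_normSq_row_eq_one (Unitary.star_mem hW) j

theorem re_trace_conj_diagonal_mul_conj_diagonal (U V : unitary (Mat ι)) (a b : ι → ℝ) :
    (Unitary.conjStarAlgAut ℂ _ U (diagonal (RCLike.ofReal ∘ a))
        * Unitary.conjStarAlgAut ℂ _ V (diagonal (RCLike.ofReal ∘ b))).trace.re
      = ∑ i, ∑ j, Complex.normSq ((star (U : Mat ι) * V) i j) * a i * b j := by
  set W : Mat ι := star (U : Mat ι) * V
  have hcycle : (Unitary.conjStarAlgAut ℂ _ U (diagonal (RCLike.ofReal ∘ a))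
        * Unitary.conjStarAlgAut ℂ _ V (diagonal (RCLike.ofReal ∘ b))).trace
      = (diagonal (RCLike.ofReal ∘ a) * (W * (diagonal (RCLike.ofReal ∘ b) * star W))).trace := by
    simp only [Unitary.conjStarAlgAut_apply, Matrix.mul_assoc]
    rw [Matrix.trace_mul_comm (U : Mat ι)]
    simp only [W, star_mul, star_star, Matrix.mul_assoc]
  rw [hcycle]
  simp only [trace, diag_apply, diagonal_mul, mul_apply (M := W), star_apply, Complex.re_sum,
    Finset.mul_sum]
  refine Finset.sum_congr rfl fun i _ => Finset.sum_congr rfl fun j _ => ?_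
  simp only [Function.comp_apply, RCLike.star_def, Complex.coe_algebraMap, Complex.mul_re,
    Complex.mul_im, Complex.ofReal_re, Complex.ofReal_im, Complex.conj_re, Complex.conj_im,
    Complex.normSq_apply]
  ring

theorem sum_eigenvalues_eq_one {ρ : Mat ι} (hρ : ρ.IsHermitian) (htr : ρ.trace = 1) :
    ∑ i, hρ.eigenvalues i = 1 := by
  have h := hρ.trace_eq_sum_eigenvalues.symm.trans htr
  rw [← RCLike.ofReal_sum] at h
  exact Complex.ofReal_eq_one.mp h

theorem eigenvalues_eq_zero_of_suppSubset {ρ σ : Mat ι} (hρ : ρ.IsHermitian)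
    (hσ : σ.IsHermitian) (hsupp : suppSubset ρ σ) {i j : ι} (hq : hσ.eigenvalues j = 0)
    (hW : (star (hρ.eigenvectorUnitary : Mat ι) * hσ.eigenvectorUnitary) i j ≠ 0) :
    hρ.eigenvalues i = 0 := by
  set U : Mat ι := ↑hρ.eigenvectorUnitary
  set V : Mat ι := ↑hσ.eigenvectorUnitary
  set v := V *ᵥ Pi.single j 1
  have hUU : star U * U = 1 := Unitary.star_mul_self_of_mem hρ.eigenvectorUnitary.2
  have hVV : star V * V = 1 := Unitary.star_mul_self_of_mem hσ.eigenvectorUnitary.2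
  have hσv : σ *ᵥ v = 0 := by
    have hcol : (diagonal (RCLike.ofReal ∘ hσ.eigenvalues) : Mat ι).col j = 0 := by
      ext k
      by_cases hk : k = j <;> simp [hk, hq]
    rw [hσ.spectral_theorem, Unitary.conjStarAlgAut_apply, mulVec_mulVec, Matrix.mul_assoc,
      Matrix.mul_assoc, hVV, mul_one, ← mulVec_mulVec, mulVec_single_one, hcol, mulVec_zero]
  have hρv : (diagonal (RCLike.ofReal ∘ hρ.eigenvalues) * (star U * V)) *ᵥ Pi.single j 1 = 0 := by
    have h := congrArg (star U *ᵥ ·) (hsupp v hσv)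
    simp only [mulVec_zero] at h
    rw [hρ.spectral_theorem, Unitary.conjStarAlgAut_apply, mulVec_mulVec, mulVec_mulVec] at h
    rw [← h, ← Matrix.mul_assoc (star U), ← Matrix.mul_assoc (star U), hUU, one_mul,
      Matrix.mul_assoc]
  have h := congrFun hρv i
  rw [mulVec_single_one, col_apply, diagonal_mul, Pi.zero_apply] at h
  simpa [hW] using h

theorem re_trace_mul_sub_matLog_nonneg {ρ σ : Mat ι} (hρ : IsState ρ) (hσ : IsState σ)
    (hsupp : suppSubset ρ σ) : 0 ≤ (ρ * (matLog ρ - matLog σ)).trace.re := by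
  set hρH := hρ.1.1
  set hσH := hσ.1.1
  set U := hρH.eigenvectorUnitary
  set V := hσH.eigenvectorUnitary
  set p := hρH.eigenvalues
  set q := hσH.eigenvalues
  set c : ι → ι → ℝ := fun i j => Complex.normSq ((star (U : Mat ι) * V) i j)
  have hW : star (U : Mat ι) * V ∈ unitary (Mat ι) := mul_mem (Unitary.star_mem U.2) V.2
  have htrace : (ρ * (matLog ρ - matLog σ)).trace.re
      = ∑ i, ∑ j, c i j * p i * (Real.logb 2 (p i) - Real.logb 2 (q j)) := by
    have hρ_eq : ρ = Unitary.conjStarAlgAut ℂ _ U (diagonal (RCLike.ofReal ∘ p)) :=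
      hρH.spectral_theorem
    have hlogρ : matLog ρ
        = Unitary.conjStarAlgAut ℂ _ U (diagonal (RCLike.ofReal ∘ Real.logb 2 ∘ p)) :=
      matLog_of_isHermitian hρH
    have hlogσ : matLog σ
        = Unitary.conjStarAlgAut ℂ _ V (diagonal (RCLike.ofReal ∘ Real.logb 2 ∘ q)) :=
      matLog_of_isHermitian hσH
    have hUU : star (U : Mat ι) * U = 1 := Unitary.star_mul_self_of_mem U.2
    have hrow := sum_normSq_row_eq_one hW
    clear_value p q U V
    rw [hlogρ, hlogσ, Matrix.mul_sub, trace_sub, Complex.sub_re, hρ_eq,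
      re_trace_conj_diagonal_mul_conj_diagonal, re_trace_conj_diagonal_mul_conj_diagonal, hUU]
    simp only [c, mul_sub, Finset.sum_sub_distrib, one_apply, Function.comp_apply]
    congr 1
    refine Finset.sum_congr rfl fun i _ => ?_
    rw [← Finset.sum_mul, ← Finset.sum_mul, hrow, one_mul]
    simp [apply_ite Complex.normSq]
  rw [htrace]
  refine sum_mul_logb_sub_logb_nonneg (fun i => hρ.1.eigenvalues_nonneg i)
    (fun j => hσ.1.eigenvalues_nonneg j) (fun i j => Complex.normSq_nonneg _)
    (sum_normSq_row_eq_one hW) (sum_normSq_col_eq_one hW)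
    (by rw [sum_eigenvalues_eq_one hρH hρ.2, sum_eigenvalues_eq_one hσH hσ.2])
    fun i j hc hq => eigenvalues_eq_zero_of_suppSubset hρH hσH hsupp hq ?_
  exact fun h => hc (Complex.normSq_eq_zero.mpr h)

end Klein

theorem dotProduct_mul_mul_conjTranspose_mulVec {m n : Type} [Fintype m] [Fintype n]
    (B : Matrix m n ℂ) (X : Mat n) (w : m → ℂ) :
    star w ⬝ᵥ (B * X * Bᴴ) *ᵥ w = star (Bᴴ *ᵥ w) ⬝ᵥ X *ᵥ (Bᴴ *ᵥ w) := by
  rw [← mulVec_mulVec, ← mulVec_mulVec, dotProduct_mulVec, star_mulVec,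
    conjTranspose_conjTranspose]

section PartialTrace

variable {A C : Type} [Fintype A] [Fintype C]

theorem trace_ptraceLeftMap (X : Mat (A × C)) : (ptraceLeftMap A C X).trace = X.trace := by
  rw [trace, trace, Fintype.sum_prod_type, Finset.sum_comm]
  rfl

variable [DecidableEq A] [DecidableEq C]

variable (C) in
/-- `blockRow C a` is `⟨a| ⊗ 1_C`. -/
def blockRow (a : A) : Matrix C (A × C) ℂ :=
  Matrix.of fun c p => if p = (a, c) then 1 else 0

theorem ptraceLeftMap_eq_sum (X : Mat (A × C)) :
    ptraceLeftMap A C X = ∑ a : A, blockRow C a * X * (blockRow C a)ᴴ := by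
  ext c c'
  simp [ptraceLeftMap, blockRow, mul_apply, Matrix.sum_apply, conjTranspose_apply]

theorem one_kronecker_eq_sum (Y : Mat C) :
    (1 : Mat A) ⊗ₖ Y = ∑ a : A, (blockRow C a)ᴴ * Y * blockRow C a := by
  ext ⟨a, c⟩ ⟨a', c'⟩
  by_cases h : a = a' <;> simp [blockRow, mul_apply, Matrix.sum_apply, one_apply, ite_and, h]

theorem blockRow_mul_one_kronecker (Y : Mat C) (a : A) :
    blockRow C a * ((1 : Mat A) ⊗ₖ Y) = Y * blockRow C a := by
  ext c ⟨a', c'⟩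
  by_cases h : a' = a <;> simp [blockRow, mul_apply, one_apply, Fintype.sum_prod_type, ite_and, h]

theorem one_kronecker_mul_conjTranspose_blockRow (Y : Mat C) (a : A) :
    ((1 : Mat A) ⊗ₖ Y) * (blockRow C a)ᴴ = (blockRow C a)ᴴ * Y := by
  simpa [conjTranspose_kronecker] using congrArg conjTranspose (blockRow_mul_one_kronecker Yᴴ a)

theorem posSemidef_ptraceLeftMap {X : Mat (A × C)} (hX : X.PosSemidef) :
    (ptraceLeftMap A C X).PosSemidef := by
  rw [ptraceLeftMap_eq_sum]
  exact posSemidef_sum _ fun a _ => hX.mul_mul_conjTranspose_same _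

theorem isState_ptraceLeftMap {X : Mat (A × C)} (hX : IsState X) :
    IsState (ptraceLeftMap A C X) :=
  ⟨posSemidef_ptraceLeftMap hX.1, (trace_ptraceLeftMap X).trans hX.2⟩

theorem trace_mul_one_kronecker (X : Mat (A × C)) (Y : Mat C) :
    (X * ((1 : Mat A) ⊗ₖ Y)).trace = (ptraceLeftMap A C X * Y).trace := by
  rw [one_kronecker_eq_sum, ptraceLeftMap_eq_sum, Matrix.mul_sum, Matrix.sum_mul, trace_sum,
    trace_sum]
  refine Finset.sum_congr rfl fun a _ => ?_
  rw [← Matrix.mul_assoc, Matrix.trace_mul_comm, ← Matrix.mul_assoc, ← Matrix.mul_assoc]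

theorem suppSubset_one_kronecker_ptraceLeftMap {X : Mat (A × C)} (hX : X.PosSemidef) :
    suppSubset X ((1 : Mat A) ⊗ₖ ptraceLeftMap A C X) := by
  intro v hv
  have hblock : ∀ a, X *ᵥ ((blockRow C a)ᴴ *ᵥ (blockRow C a *ᵥ v)) = 0 := by
    intro a
    set w := blockRow C a *ᵥ v
    have hw : ptraceLeftMap A C X *ᵥ w = 0 := by
      rw [mulVec_mulVec, ← blockRow_mul_one_kronecker, ← mulVec_mulVec, hv, mulVec_zero]
    have hquad : ∑ x, star ((blockRow C x)ᴴ *ᵥ w) ⬝ᵥ X *ᵥ ((blockRow C x)ᴴ *ᵥ w) = 0 := by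
      simp only [← dotProduct_mul_mul_conjTranspose_mulVec, ← dotProduct_sum, ← sum_mulVec,
        ← ptraceLeftMap_eq_sum, hw, dotProduct_zero]
    refine (hX.dotProduct_mulVec_zero_iff _).mp ?_
    exact (Finset.sum_eq_zero_iff_of_nonneg fun x _ => hX.dotProduct_mulVec_nonneg _).mp hquad a
      (Finset.mem_univ a)
  have hv' : v = ∑ a, (blockRow C a)ᴴ *ᵥ (blockRow C a *ᵥ v) := by
    have hunit := one_kronecker_eq_sum (A := A) (1 : Mat C)
    simp only [Matrix.mul_one, one_kronecker_one] at hunit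
    simp only [mulVec_mulVec]
    rw [← sum_mulVec, ← hunit, one_mulVec]
  rw [hv', mulVec_sum]
  exact Finset.sum_eq_zero fun a _ => hblock a

theorem ptraceLeftMap_suppSubset {X : Mat (A × C)} {σ : Mat C}
    (h : suppSubset X ((1 : Mat A) ⊗ₖ σ)) : suppSubset (ptraceLeftMap A C X) σ := by
  intro y hy
  have hblock : ∀ a, X *ᵥ ((blockRow C a)ᴴ *ᵥ y) = 0 := fun a => h _ <| by
    rw [mulVec_mulVec, one_kronecker_mul_conjTranspose_blockRow, ← mulVec_mulVec, hy, mulVec_zero]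
  simp only [ptraceLeftMap_eq_sum, sum_mulVec, ← mulVec_mulVec, hblock, mulVec_zero,
    Finset.sum_const_zero]

theorem relEnt_one_kronecker_ptraceLeftMap_le {ρ : Mat (A × C)} {σ : Mat C} (hρ : IsState ρ)
    (hσ : IsState σ) :
    relEnt ρ ((1 : Mat A) ⊗ₖ ptraceLeftMap A C ρ) ≤ relEnt ρ ((1 : Mat A) ⊗ₖ σ) := by
  by_cases hs : suppSubset ρ ((1 : Mat A) ⊗ₖ σ)
  swap
  · simp [relEnt, hs]
  have hρC := isState_ptraceLeftMap hρ
  have hklein := re_trace_mul_sub_matLog_nonneg hρC hσ (ptraceLeftMap_suppSubset hs)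
  rw [relEnt, relEnt, if_pos (suppSubset_one_kronecker_ptraceLeftMap hρ.1), if_pos hs,
    EReal.coe_le_coe_iff]
  rw [Matrix.mul_sub, trace_sub, Complex.sub_re] at hklein
  rw [Matrix.mul_sub, Matrix.mul_sub, trace_sub, trace_sub, Complex.sub_re, Complex.sub_re,
    matLog_one_kronecker hσ.1.1, matLog_one_kronecker hρC.1.1, trace_mul_one_kronecker,
    trace_mul_one_kronecker]
  linarith

end PartialTrace

section Reindex

variable {ι κ : Type} [Fintype ι] [Fintype κ]

theorem trace_reindexMap (e : ι ≃ κ) (ρ : Mat ι) : (reindexMap e ρ).trace = ρ.trace :=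
  Equiv.sum_comp e.symm fun i => ρ i i

theorem isState_reindexMap (e : ι ≃ κ) {ρ : Mat ι} (hρ : IsState ρ) : IsState (reindexMap e ρ) :=
  ⟨hρ.1.submatrix e.symm, (trace_reindexMap e ρ).trans hρ.2⟩

theorem reindexMap_mulVec_eq_zero_iff (e : ι ≃ κ) (M : Mat ι) (u : κ → ℂ) :
    reindexMap e M *ᵥ u = 0 ↔ M *ᵥ (u ∘ e) = 0 := by
  rw [reindexMap, LinearEquiv.coe_coe, coe_reindexLinearEquiv, reindex_apply,
    submatrix_mulVec_equiv, Equiv.symm_symm]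
  exact ⟨fun h => funext fun i => by simpa using congrFun h (e i), fun h => by rw [h]; rfl⟩

theorem suppSubset_reindexMap_iff (e : ι ≃ κ) (ρ σ : Mat ι) :
    suppSubset (reindexMap e ρ) (reindexMap e σ) ↔ suppSubset ρ σ := by
  simp only [suppSubset, reindexMap_mulVec_eq_zero_iff]
  exact ⟨fun h v => by simpa [Function.comp_def] using h (v ∘ e.symm), fun h u => h (u ∘ e)⟩

theorem relEnt_reindexMap [DecidableEq ι] [DecidableEq κ] (e : ι ≃ κ) (ρ σ : Mat ι) :
    relEnt (reindexMap e ρ) (reindexMap e σ) = relEnt ρ σ := by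
  have htrace : reindexMap e ρ * (matLog (reindexMap e ρ) - matLog (reindexMap e σ))
      = reindexMap e (ρ * (matLog ρ - matLog σ)) := by
    rw [matLog_reindexMap, matLog_reindexMap, ← map_sub]
    exact (map_mul (reindexStarAlgEquiv e) _ _).symm
  rw [relEnt, relEnt, htrace, trace_reindexMap]
  congr 1
  exact propext (suppSubset_reindexMap_iff e ρ σ)

end Reindex

section TensorMap

theorem linearMap_eq_sum_single {ι κ : Type} [Fintype ι] [DecidableEq ι] (L : MatMap ι κ)
    (X : Mat ι) : L X = ∑ i, ∑ j, X i j • L (single i j 1) := by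
  conv_lhs => rw [matrix_eq_sum_single X]
  simp only [map_sum, ← map_smul, smul_single, smul_eq_mul, mul_one]

theorem trace_single_eq_ite {ι : Type} [Fintype ι] [DecidableEq ι] (i j : ι) (c : ℂ) :
    (single i j c).trace = if i = j then c else 0 := by
  split_ifs with h
  · exact h ▸ trace_single_eq_same i c
  · exact trace_single_eq_of_ne i j c h

variable {ι κ κ' : Type} [Fintype ι] [DecidableEq ι] [Fintype κ] [DecidableEq κ]

theorem tensorMap_id_apply (L : MatMap κ κ') (X : Mat (ι × κ)) (i j : ι) (k l : κ') :
    tensorMap (LinearMap.id : MatMap ι ι) L X (i, k) (j, l)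
      = L (X.submatrix (Prod.mk i) (Prod.mk j)) k l := by
  rw [linearMap_eq_sum_single L]
  simp [tensorMap, single_apply, ite_and, Matrix.sum_apply]

theorem TracePreserving.tensorMap_id [Fintype κ'] {L : MatMap κ κ'} (hL : TracePreserving L) :
    TracePreserving (tensorMap (LinearMap.id : MatMap ι ι) L) := by
  intro X
  simp only [trace, diag_apply, Fintype.sum_prod_type, tensorMap_id_apply]
  exact Finset.sum_congr rfl fun i _ => hL _

theorem IsChannel.isState_tensorMap_id [Fintype κ'] {r : ℕ} {L : MatMap κ κ'} (hL : IsChannel L)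
    {X : Mat (Fin r × κ)} (hX : IsState X) :
    IsState (tensorMap (LinearMap.id : MatMap (Fin r) (Fin r)) L X) :=
  ⟨hL.1 r X hX.1, (hL.2.tensorMap_id X).trans hX.2⟩

theorem tensorMap_Rmap {A' B' A B : Type} [Fintype A'] [DecidableEq A'] [Fintype B']
    [DecidableEq B'] [DecidableEq A] (M : MatMap B' B) (X : Mat (A' × B')) :
    tensorMap (Rmap A' A) M X = (1 : Mat A) ⊗ₖ M (ptraceLeftMap A' B' X) := by
  ext ⟨a, b⟩ ⟨a', b'⟩
  rw [kroneckerMap_apply, linearMap_eq_sum_single M (ptraceLeftMap A' B' X)]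
  simp only [tensorMap, Rmap, ptraceLeftMap, LinearMap.coe_mk, AddHom.coe_mk, of_apply,
    trace_single_eq_ite, Matrix.smul_apply, Matrix.sum_apply, smul_eq_mul, ite_mul, one_mul,
    zero_mul, mul_ite, mul_zero, Finset.sum_ite_irrel, Finset.sum_const_zero, Finset.sum_ite_eq,
    Finset.mem_univ, if_true, Finset.sum_mul, Finset.mul_sum]
  conv_rhs => enter [2, x]; rw [Finset.sum_comm]
  rw [Finset.sum_comm]
  simp only [mul_assoc, mul_left_comm]

end TensorMap

theorem reindexMap_swapRA_tensorMap_Rmap {R A' B' A B : Type} [Fintype R] [DecidableEq R]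
    [Fintype A'] [DecidableEq A'] [Fintype B'] [DecidableEq B'] [DecidableEq A]
    (M : MatMap B' B) (ψ : Mat (R × (A' × B'))) :
    reindexMap (swapRA R A B)
        (tensorMap (LinearMap.id : MatMap R R) (tensorMap (Rmap A' A) M) ψ)
      = (1 : Mat A) ⊗ₖ tensorMap (LinearMap.id : MatMap R R) M
          (ptraceLeftMap A' (R × B') (reindexMap (swapRA R A' B') ψ)) := by
  ext ⟨a₁, r₁, b₁⟩ ⟨a₂, r₂, b₂⟩
  simp only [reindexMap, LinearEquiv.coe_coe, coe_reindexLinearEquiv, reindex_apply,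
    submatrix_apply, kroneckerMap_apply, swapRA, Equiv.coe_fn_symm_mk, tensorMap_id_apply,
    tensorMap_Rmap]
  rfl

/-- the von Neumann conditional entropy of a bipartite channel is at most
the least output conditional entropy `inf_ψ S(A|RB)_{(id⊗N)(ψ)}`. -/
theorem stmt8 (a' b' a b : ℕ)
    (N : MatMap (Fin a' × Fin b') (Fin a × Fin b)) (hN : IsChannel N) :
    vnCondEnt N ≤ minOutCondEnt N := by
  refine le_iInf₂ fun r ψ => ?_
  rw [vnCondEnt, vnCondEntState, EReal.neg_le_neg_iff]
  refine le_iInf fun M => ?_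
  set ρ := tensorMap (LinearMap.id : MatMap (Fin r) (Fin r)) N ψ.1
  set τ := ptraceLeftMap (Fin a') (Fin r × Fin b') (reindexMap (swapRA (Fin r) (Fin a') (Fin b')) ψ.1)
  have hρ : IsState (reindexMap (swapRA (Fin r) (Fin a) (Fin b)) ρ) :=
    isState_reindexMap _ (hN.isState_tensorMap_id ψ.2.1)
  have hσ : IsState (tensorMap (LinearMap.id : MatMap (Fin r) (Fin r)) M.1 τ) :=
    M.2.isState_tensorMap_id (isState_ptraceLeftMap (isState_reindexMap _ ψ.2.1))
  calc _ ≤ relEnt (reindexMap (swapRA (Fin r) (Fin a) (Fin b)) ρ)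
          ((1 : Mat (Fin a)) ⊗ₖ tensorMap (LinearMap.id : MatMap (Fin r) (Fin r)) M.1 τ) :=
        relEnt_one_kronecker_ptraceLeftMap_le hρ hσ
    _ = relEnt ρ (tensorMap (LinearMap.id : MatMap (Fin r) (Fin r))
          (tensorMap (Rmap (Fin a') (Fin a)) M.1) ψ.1) := by
        rw [← reindexMap_swapRA_tensorMap_Rmap, relEnt_reindexMap]
    _ ≤ relChDiv N (tensorMap (Rmap (Fin a') (Fin a)) M.1) :=
        le_iSup₂_of_le r ⟨ψ.1, ψ.2.1⟩ le_rfl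

end
end QIT
end
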